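/- Let A and B be Hermitian n×n complex matrices, T ≥ 0, and k ≥ 0 an integer. With B_I(t) = e^{iAt} B e^{−iAt}, D_0 = I, and D_m = ∫_{0 ≤ t_m ≤ ⋯ ≤ t_1 ≤ T} B_I(t_1) ⋯ B_I(t_m) dt_1 ⋯ dt_m, the error of the k-th order Dyson truncation satisfies ‖ e^{−i(A+B)T} − e^{−iAT} Σ_{m=0}^{k} (−i)^m D_m ‖ ≤ e^{‖B‖T} (‖B‖T)^{k+1} / (k+1)!, where ‖·‖ is the operator (spectral) norm. -/

import Mathlib

open Matrix MeasureTheory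
open scoped Matrix.Norms.L2Operator

/-- The interaction-picture operator `B_I(t) = e^{iAt} B e^{−iAt}`. -/
noncomputable def interactionPicture {n : ℕ} (A B : Matrix (Fin n) (Fin n) ℂ) (t : ℝ) :
    Matrix (Fin n) (Fin n) ℂ :=
  NormedSpace.exp ((Complex.I * (t : ℂ)) • A) * B *
    NormedSpace.exp ((-(Complex.I * (t : ℂ))) • A)

/-- The ordered simplex `{(t_1, …, t_m) : 0 ≤ t_m ≤ ⋯ ≤ t_1 ≤ T}`. -/
def orderedSimplex (m : ℕ) (T : ℝ) : Set (Fin m → ℝ) :=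
  {t | (∀ i, t i ∈ Set.Icc 0 T) ∧ ∀ i j : Fin m, i ≤ j → t j ≤ t i}

/-- The `m`-th Dyson term
`D_m = ∫_{0 ≤ t_m ≤ ⋯ ≤ t_1 ≤ T} B_I(t_1) ⋯ B_I(t_m) dt_1 ⋯ dt_m` (with `D_0 = I`). -/
noncomputable def dysonTerm {n : ℕ} (A B : Matrix (Fin n) (Fin n) ℂ) (T : ℝ) (m : ℕ) :
    Matrix (Fin n) (Fin n) ℂ :=
  ∫ t in orderedSimplex m T,
    (List.ofFn fun i : Fin m => interactionPicture A B (t i)).prod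

/-!
Put `W(t) = e^{iAt} e^{-i(A+B)t}`. Then `e^{-i(A+B)T} = e^{-iAT} W(T)` with `e^{-iAT}` unitary,
so the claim is about `‖W(T) - S_{k+1}(T)‖`, where `S_k = ∑_{m<k} (-i)^m D_m`. Both `W` and the
partial sums obey the same Volterra recursion with kernel `V(s) = -i B_I(s)`:
`W(t) = 1 + ∫₀ᵗ V W` by the fundamental theorem of calculus, and `S_{k+1}(t) = 1 + ∫₀ᵗ V S_k`
because Fubini over the simplex gives `D_{m+1}(t) = ∫₀ᵗ B_I(s) D_m(s) ds`. Hence `W - S_k` is the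
`k`-fold Volterra integral of `W`. As `‖V‖ = ‖B‖` and Grönwall gives `‖W(s)‖ ≤ e^{‖B‖s}`, it is
at most `e^{‖B‖T} (‖B‖t)^k / k!` on `[0, T]`.
-/

open NormedSpace Set
open Complex (I)

theorem CStarRing.norm_one_le {E : Type*} [NormedRing E] [StarRing E] [CStarRing E] :
    ‖(1 : E)‖ ≤ 1 := by
  rcases subsingleton_or_nontrivial E with hE | hE
  · simp [Subsingleton.elim (1 : E) 0]
  · exact CStarRing.norm_one.le

theorem mul_ofReal_smul {M : Type*} [AddCommGroup M] [Module ℂ M] (c : ℂ) (X : M) (t : ℝ) :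
    (c * t) • X = t • (c • X) := by
  rw [mul_comm, mul_smul, Complex.coe_smul]

section VolterraIteration

variable {E : Type*} [NormedRing E] [NormedSpace ℝ E]

theorem norm_le_pow_div_factorial_of_eq_setIntegral_mul {V : ℝ → E} {f : ℕ → ℝ → E}
    {T b M : ℝ} (hV : ∀ s ∈ Icc 0 T, ‖V s‖ ≤ b) (hf₀ : ∀ s ∈ Icc 0 T, ‖f 0 s‖ ≤ M)
    (hf : ∀ k, ∀ t ∈ Icc 0 T, f (k + 1) t = ∫ s in Icc 0 t, V s * f k s) (k : ℕ) :
    ∀ t ∈ Icc 0 T, ‖f k t‖ ≤ M * (b * t) ^ k / k.factorial := by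
  induction k with
  | zero => simpa using hf₀
  | succ k ih =>
    intro t ht
    have hb : 0 ≤ b := (norm_nonneg _).trans (hV 0 ⟨le_rfl, ht.1.trans ht.2⟩)
    have hsub : Icc 0 t ⊆ Icc 0 T := Icc_subset_Icc_right ht.2
    have hbound :
        ∀ s ∈ Icc 0 t, ‖V s * f k s‖ ≤ M * b ^ (k + 1) / k.factorial * s ^ k := by
      intro s hs
      calc ‖V s * f k s‖ ≤ b * (M * (b * s) ^ k / k.factorial) :=
            (norm_mul_le _ _).trans
              (mul_le_mul (hV s (hsub hs)) (ih s (hsub hs)) (norm_nonneg _) hb)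
        _ = M * b ^ (k + 1) / k.factorial * s ^ k := by ring
    calc ‖f (k + 1) t‖ = ‖∫ s in Icc 0 t, V s * f k s‖ := by rw [hf k t ht]
      _ ≤ ∫ s in Icc 0 t, M * b ^ (k + 1) / k.factorial * s ^ k :=
          norm_integral_le_of_norm_le
            ((continuous_const.mul (continuous_pow k)).integrableOn_Icc)
            ((ae_restrict_iff' measurableSet_Icc).2 (.of_forall hbound))
      _ = M * (b * t) ^ (k + 1) / (k + 1).factorial := by
          rw [integral_Icc_eq_integral_Ioc, ← intervalIntegral.integral_of_le ht.1,
            intervalIntegral.integral_const_mul, integral_pow, Nat.factorial_succ]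
          push_cast
          field_simp
          ring

end VolterraIteration

theorem cons_mem_orderedSimplex_succ {m : ℕ} {T s : ℝ} {u : Fin m → ℝ} :
    (Fin.cons s u : Fin (m + 1) → ℝ) ∈ orderedSimplex (m + 1) T ↔
      s ∈ Icc 0 T ∧ u ∈ orderedSimplex m s := by
  simp only [orderedSimplex, mem_ofPred_eq, Fin.forall_fin_succ, Fin.cons_zero, Fin.cons_succ,
    Fin.succ_le_succ_iff, Fin.zero_le, le_refl, forall_true_left, mem_Icc, Fin.le_zero_iff,
    Fin.succ_ne_zero, IsEmpty.forall_iff, true_and]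
  constructor
  · rintro ⟨⟨hs, hu⟩, hus, hmono⟩
    exact ⟨hs, fun i => ⟨(hu i).1, hus i⟩, hmono⟩
  · rintro ⟨hs, hu, hmono⟩
    exact ⟨⟨hs, fun i => ⟨(hu i).1, (hu i).2.trans hs.2⟩⟩, fun i => (hu i).2, hmono⟩

theorem isClosed_orderedSimplex (m : ℕ) (T : ℝ) : IsClosed (orderedSimplex m T) := by
  simp only [orderedSimplex, ofPred_and, ofPred_forall]
  exact (isClosed_iInter fun i => isClosed_Icc.preimage (continuous_apply i)).inter
    (isClosed_iInter fun i => isClosed_iInter fun j => isClosed_iInter fun _ =>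
      isClosed_le (continuous_apply j) (continuous_apply i))

theorem isCompact_orderedSimplex (m : ℕ) (T : ℝ) : IsCompact (orderedSimplex m T) :=
  (isCompact_univ_pi fun _ => isCompact_Icc).of_isClosed_subset (isClosed_orderedSimplex m T)
    fun _ ht => mem_univ_pi.2 ht.1

theorem MeasurableEquiv.piFinSuccAbove_zero_symm_apply {α : Type*} [MeasurableSpace α] {m : ℕ}
    (p : α × (Fin m → α)) :
    (MeasurableEquiv.piFinSuccAbove (fun _ => α) 0).symm p = Fin.cons p.1 p.2 := by
  simp [MeasurableEquiv.piFinSuccAbove_symm_apply, Fin.insertNthEquiv, Fin.insertNth_zero']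

section SimplexFubini

variable {E : Type*} [NormedAddCommGroup E] {m : ℕ} {T : ℝ}

theorem integrable_indicator_orderedSimplex_cons {F : (Fin (m + 1) → ℝ) → E}
    (hF : IntegrableOn F (orderedSimplex (m + 1) T)) :
    Integrable (fun p : ℝ × (Fin m → ℝ) =>
      (orderedSimplex (m + 1) T).indicator F (Fin.cons p.1 p.2)) (volume.prod volume) := by
  have he := (volume_preserving_piFinSuccAbove (fun _ : Fin (m + 1) => ℝ) 0).symm
  rw [← integrable_indicator_iff (isClosed_orderedSimplex _ T).measurableSet,
    ← he.integrable_comp_emb (MeasurableEquiv.measurableEmbedding _)] at hF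
  simpa only [Function.comp_def, MeasurableEquiv.piFinSuccAbove_zero_symm_apply,
    Measure.volume_eq_prod] using hF

variable [NormedSpace ℝ E]

theorem integral_indicator_orderedSimplex_cons (F : (Fin (m + 1) → ℝ) → E) (s : ℝ) :
    ∫ u, (orderedSimplex (m + 1) T).indicator F (Fin.cons s u) =
      (Icc 0 T).indicator (fun s => ∫ u in orderedSimplex m s, F (Fin.cons s u)) s := by
  classical
  by_cases hs : s ∈ Icc 0 T
  · rw [indicator_of_mem hs, ← integral_indicator (isClosed_orderedSimplex m s).measurableSet]
    congr 1 with u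
    simp only [indicator_apply, cons_mem_orderedSimplex_succ, hs, true_and]
  · simp only [indicator, cons_mem_orderedSimplex_succ, hs, false_and, if_false, integral_zero]

theorem integrableOn_setIntegral_orderedSimplex_cons {F : (Fin (m + 1) → ℝ) → E}
    (hF : IntegrableOn F (orderedSimplex (m + 1) T)) :
    IntegrableOn (fun s => ∫ u in orderedSimplex m s, F (Fin.cons s u)) (Icc 0 T) := by
  rw [← integrable_indicator_iff measurableSet_Icc]
  simpa only [integral_indicator_orderedSimplex_cons] using
    (integrable_indicator_orderedSimplex_cons hF).integral_prod_left

theorem setIntegral_orderedSimplex_succ {F : (Fin (m + 1) → ℝ) → E}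
    (hF : IntegrableOn F (orderedSimplex (m + 1) T)) :
    ∫ x in orderedSimplex (m + 1) T, F x =
      ∫ s in Icc 0 T, ∫ u in orderedSimplex m s, F (Fin.cons s u) := by
  have he := (volume_preserving_piFinSuccAbove (fun _ : Fin (m + 1) => ℝ) 0).symm
  rw [← integral_indicator (isClosed_orderedSimplex _ T).measurableSet, ← he.integral_comp',
    ← integral_indicator measurableSet_Icc]
  simp only [MeasurableEquiv.piFinSuccAbove_zero_symm_apply, Measure.volume_eq_prod]
  rw [integral_prod _ (integrable_indicator_orderedSimplex_cons hF)]
  simp only [integral_indicator_orderedSimplex_cons]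

end SimplexFubini

-- The `NormedSpace.exp` API (`exp_add_of_commute`, `exp_continuous`, ...) is stated for normed
-- `ℚ`-algebras.
noncomputable instance Matrix.normedAlgebraRat {n : ℕ} :
    NormedAlgebra ℚ (Matrix (Fin n) (Fin n) ℂ) :=
  NormedAlgebra.restrictScalars ℚ ℂ _

section InteractionPicture

variable {n : ℕ}

local notation "𝕄" => Matrix (Fin n) (Fin n) ℂ

theorem star_I_mul_ofReal (t : ℝ) : star (I * t) = -(I * t) := by
  simp

theorem star_neg_I_mul_ofReal (t : ℝ) : star (-(I * t)) = -(-(I * t)) := by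
  rw [star_neg, star_I_mul_ofReal]

theorem exp_smul_mem_unitary_of_isHermitian {A : 𝕄} (hA : A.IsHermitian) {c : ℂ}
    (hc : star c = -c) : exp (c • A) ∈ unitary 𝕄 :=
  exp_mem_unitary_of_mem_skewAdjoint (hA.isSelfAdjoint.smul_mem_skewAdjoint hc)

theorem norm_interactionPicture {A : 𝕄} (hA : A.IsHermitian) (B : 𝕄) (t : ℝ) :
    ‖interactionPicture A B t‖ = ‖B‖ := by
  have hU := exp_smul_mem_unitary_of_isHermitian hA (star_I_mul_ofReal t)
  have hV := exp_smul_mem_unitary_of_isHermitian hA (star_neg_I_mul_ofReal t)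
  rw [interactionPicture, CStarRing.norm_mul_coe_unitary _ ⟨_, hV⟩,
    CStarRing.norm_coe_unitary_mul ⟨_, hU⟩]

theorem continuous_interactionPicture (A B : 𝕄) : Continuous (interactionPicture A B) := by
  unfold interactionPicture
  fun_prop

noncomputable def interactionPropagator (A B : 𝕄) (t : ℝ) : 𝕄 :=
  exp ((I * t) • A) * exp ((-(I * t)) • (A + B))

theorem hasDerivAt_interactionPropagator (A B : 𝕄) (t : ℝ) :
    HasDerivAt (interactionPropagator A B)
      ((-I • interactionPicture A B t) * interactionPropagator A B t) t := by
  set M : 𝕄 := I • A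
  set N : 𝕄 := -I • (A + B)
  have hW : interactionPropagator A B = fun u : ℝ => exp (u • M) * exp (u • N) := by
    funext u
    simp only [interactionPropagator, ← neg_mul, mul_ofReal_smul, M, N]
  have hinv : exp (-(t • M)) * exp (t • M) = 1 := by
    rw [← NormedSpace.exp_add_of_commute (Commute.refl _).neg_left, neg_add_cancel, exp_zero]
  have hMN : M + N = -I • B := by simp only [M, N, smul_add, neg_smul]; abel
  rw [hW]
  refine ((hasDerivAt_exp_smul_const M t).mul (hasDerivAt_exp_smul_const' N t)).congr_deriv ?_
  have hneg : t • -I • A = -(t • M) := by simp only [M, neg_smul, smul_neg]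
  calc exp (t • M) * M * exp (t • N) + exp (t • M) * (N * exp (t • N))
      = exp (t • M) * (M + N) * exp (t • N) := by noncomm_ring
    _ = -I • (exp (t • M) * B * exp (-(t • M))) * (exp (t • M) * exp (t • N)) := by
      rw [hMN, smul_mul_assoc, mul_assoc _ (exp (-(t • M))), ← mul_assoc (exp (-(t • M))),
        hinv, one_mul, mul_smul_comm, smul_mul_assoc]
    _ = _ := by simp only [interactionPicture, ← neg_mul, mul_ofReal_smul, hneg, M]

theorem norm_neg_I_smul_interactionPicture {A : 𝕄} (hA : A.IsHermitian) (B : 𝕄) (t : ℝ) :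
    ‖-I • interactionPicture A B t‖ = ‖B‖ := by
  rw [norm_smul, norm_neg, Complex.norm_I, one_mul, norm_interactionPicture hA]

theorem interactionPropagator_zero (A B : 𝕄) : interactionPropagator A B 0 = 1 := by
  simp [interactionPropagator]

theorem continuous_interactionPropagator (A B : 𝕄) : Continuous (interactionPropagator A B) := by
  unfold interactionPropagator
  fun_prop

theorem interactionPropagator_eq_one_add_setIntegral (A B : 𝕄) {t : ℝ} (ht : 0 ≤ t) :
    interactionPropagator A B t =
      1 + ∫ s in Icc 0 t, (-I • interactionPicture A B s) * interactionPropagator A B s := by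
  have hcont :
      Continuous fun s => (-I • interactionPicture A B s) * interactionPropagator A B s :=
    ((continuous_interactionPicture A B).const_smul (-I)).mul
      (continuous_interactionPropagator A B)
  have hftc := intervalIntegral.integral_eq_sub_of_hasDerivAt
    (fun s _ => hasDerivAt_interactionPropagator A B s) (hcont.intervalIntegrable 0 t)
  rw [integral_Icc_eq_integral_Ioc, ← intervalIntegral.integral_of_le ht, hftc,
    interactionPropagator_zero, add_sub_cancel]

theorem norm_interactionPropagator_le {A : 𝕄} (hA : A.IsHermitian) (B : 𝕄) {t : ℝ}
    (ht : 0 ≤ t) : ‖interactionPropagator A B t‖ ≤ Real.exp (‖B‖ * t) := by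
  have hbound : ∀ s ∈ Ico 0 t,
      ‖(-I • interactionPicture A B s) * interactionPropagator A B s‖ ≤
      ‖B‖ * ‖interactionPropagator A B s‖ + 0 := fun s _ => by
    rw [add_zero, ← norm_neg_I_smul_interactionPicture hA B s]
    exact norm_mul_le _ _
  simpa [gronwallBound_ε0] using norm_le_gronwallBound_of_norm_deriv_right_le (δ := 1)
    (continuous_interactionPropagator A B).continuousOn
    (fun s _ => (hasDerivAt_interactionPropagator A B s).hasDerivWithinAt)
    (by rw [interactionPropagator_zero]; exact CStarRing.norm_one_le) hbound t ⟨ht, le_rfl⟩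

theorem dysonTerm_zero (A B : 𝕄) (T : ℝ) : dysonTerm A B T 0 = 1 := by
  have huniv : orderedSimplex 0 T = univ := by ext t; simp [orderedSimplex]
  rw [dysonTerm, huniv]
  simp only [List.ofFn_zero, List.prod_nil]
  rw [Measure.restrict_univ, integral_const, volume_pi, measureReal_def, Measure.pi_univ]
  simp

theorem integrableOn_prod_interactionPicture (A B : 𝕄) (m : ℕ) (T : ℝ) :
    IntegrableOn (fun t : Fin m → ℝ => (List.ofFn fun i => interactionPicture A B (t i)).prod)
      (orderedSimplex m T) := by
  refine (Continuous.continuousOn ?_).integrableOn_compact (isCompact_orderedSimplex m T)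
  simp only [List.ofFn_eq_map]
  exact continuous_list_prod _ fun i _ =>
    (continuous_interactionPicture A B).comp (continuous_apply i)

theorem setIntegral_prod_interactionPicture_cons (A B : 𝕄) (m : ℕ) (s : ℝ) :
    ∫ u in orderedSimplex m s,
      (List.ofFn fun i => interactionPicture A B ((Fin.cons s u : Fin (m + 1) → ℝ) i)).prod =
      interactionPicture A B s * dysonTerm A B s m := by
  simp only [List.ofFn_succ, Fin.cons_zero, Fin.cons_succ, List.prod_cons]
  exact integral_const_mul_of_integrable (integrableOn_prod_interactionPicture A B m s)

theorem dysonTerm_succ (A B : 𝕄) (T : ℝ) (m : ℕ) :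
    dysonTerm A B T (m + 1) = ∫ s in Icc 0 T, interactionPicture A B s * dysonTerm A B s m := by
  rw [dysonTerm, setIntegral_orderedSimplex_succ (integrableOn_prod_interactionPicture A B _ T)]
  simp only [setIntegral_prod_interactionPicture_cons]

theorem integrableOn_interactionPicture_mul_dysonTerm (A B : 𝕄) (T : ℝ) (m : ℕ) :
    IntegrableOn (fun s => interactionPicture A B s * dysonTerm A B s m) (Icc 0 T) := by
  simpa only [setIntegral_prod_interactionPicture_cons] using
    integrableOn_setIntegral_orderedSimplex_cons (integrableOn_prod_interactionPicture A B _ T)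

noncomputable def dysonPartialSum (A B : 𝕄) (k : ℕ) (t : ℝ) : 𝕄 :=
  ∑ m ∈ Finset.range k, (-I) ^ m • dysonTerm A B t m

theorem neg_I_smul_mul_dysonTerm (A B : 𝕄) (m : ℕ) (s : ℝ) :
    (-I • interactionPicture A B s) * ((-I) ^ m • dysonTerm A B s m) =
      (-I) ^ (m + 1) • (interactionPicture A B s * dysonTerm A B s m) := by
  rw [smul_mul_smul_comm, pow_succ']

theorem dysonPartialSum_succ (A B : 𝕄) (k : ℕ) (t : ℝ) :
    dysonPartialSum A B (k + 1) t =
      1 + ∫ s in Icc 0 t, (-I • interactionPicture A B s) * dysonPartialSum A B k s := by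
  have hterm : ∀ m, IntegrableOn
      (fun s => (-I) ^ (m + 1) • (interactionPicture A B s * dysonTerm A B s m)) (Icc 0 t) :=
    fun m => (integrableOn_interactionPicture_mul_dysonTerm A B t m).smul ((-I) ^ (m + 1))
  simp only [dysonPartialSum, Finset.mul_sum, neg_I_smul_mul_dysonTerm]
  rw [integral_finsetSum _ fun m _ => hterm m,
    Finset.sum_range_succ', pow_zero, one_smul, dysonTerm_zero, add_comm]
  simp only [dysonTerm_succ, integral_smul]

theorem integrableOn_mul_dysonPartialSum (A B : 𝕄) (k : ℕ) (T : ℝ) :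
    IntegrableOn (fun s => (-I • interactionPicture A B s) * dysonPartialSum A B k s)
      (Icc 0 T) := by
  simp only [dysonPartialSum, Finset.mul_sum, neg_I_smul_mul_dysonTerm]
  exact integrable_finsetSum _ fun m _ =>
    (integrableOn_interactionPicture_mul_dysonTerm A B T m).smul ((-I) ^ (m + 1))

theorem norm_interactionPropagator_sub_dysonPartialSum_le {A : 𝕄} (hA : A.IsHermitian) (B : 𝕄)
    {T : ℝ} (hT : 0 ≤ T) (k : ℕ) :
    ‖interactionPropagator A B T - dysonPartialSum A B k T‖ ≤
      Real.exp (‖B‖ * T) * (‖B‖ * T) ^ k / k.factorial := by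
  refine norm_le_pow_div_factorial_of_eq_setIntegral_mul
    (V := fun s => -I • interactionPicture A B s)
    (f := fun k t => interactionPropagator A B t - dysonPartialSum A B k t)
    (fun s _ => (norm_neg_I_smul_interactionPicture hA B s).le) (fun s hs => ?_)
    (fun k t ht => ?_) k T ⟨hT, le_rfl⟩
  · simpa [dysonPartialSum] using (norm_interactionPropagator_le hA B hs.1).trans
      (Real.exp_le_exp.2 (mul_le_mul_of_nonneg_left hs.2 (norm_nonneg B)))
  · rw [interactionPropagator_eq_one_add_setIntegral A B ht.1, dysonPartialSum_succ,
      add_sub_add_left_eq_sub, ← integral_sub _ (integrableOn_mul_dysonPartialSum A B k t)]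
    · simp only [mul_sub]
    · exact (((continuous_interactionPicture A B).const_smul (-I)).mul
        (continuous_interactionPropagator A B)).integrableOn_Icc

theorem exp_mul_interactionPropagator (A B : 𝕄) (T : ℝ) :
    exp ((-(I * T)) • A) * interactionPropagator A B T = exp ((-(I * T)) • (A + B)) := by
  have hinv : exp ((-(I * T)) • A) * exp ((I * T) • A) = 1 := by
    rw [neg_smul, ← NormedSpace.exp_add_of_commute (Commute.refl _).neg_left, neg_add_cancel,
      NormedSpace.exp_zero]
  rw [interactionPropagator, ← mul_assoc, hinv, one_mul]

end InteractionPicture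

theorem stmt8_general (n : ℕ) (A B : Matrix (Fin n) (Fin n) ℂ)
    (hA : A.IsHermitian) (T : ℝ) (hT : 0 ≤ T) (k : ℕ) :
    ‖NormedSpace.exp ((-(Complex.I * (T : ℂ))) • (A + B))
        - NormedSpace.exp ((-(Complex.I * (T : ℂ))) • A) *
            ∑ m ∈ Finset.range (k + 1), (-Complex.I) ^ m • dysonTerm A B T m‖
      ≤ Real.exp (‖B‖ * T) * (‖B‖ * T) ^ (k + 1) / (k + 1).factorial := by
  have hU := exp_smul_mem_unitary_of_isHermitian hA (star_neg_I_mul_ofReal T)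
  rw [← exp_mul_interactionPropagator, ← mul_sub, CStarRing.norm_coe_unitary_mul ⟨_, hU⟩]
  exact norm_interactionPropagator_sub_dysonPartialSum_le hA B hT (k + 1)

/-- **Error of the `k`-th order Dyson truncation.** -/
theorem stmt8 (n : ℕ) (A B : Matrix (Fin n) (Fin n) ℂ)
    (hA : A.IsHermitian) (hB : B.IsHermitian) (T : ℝ) (hT : 0 ≤ T) (k : ℕ) :
    ‖NormedSpace.exp ((-(Complex.I * (T : ℂ))) • (A + B))
        - NormedSpace.exp ((-(Complex.I * (T : ℂ))) • A) *
            ∑ m ∈ Finset.range (k + 1), (-Complex.I) ^ m • dysonTerm A B T m‖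
      ≤ Real.exp (‖B‖ * T) * (‖B‖ * T) ^ (k + 1) / (k + 1).factorial :=
  stmt8_general n A B hA T hT k
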